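/- arXiv:2007.12840 — 4 statements merged into one kernel-verified Lean document; each statement's English description precedes it below -/
import Mathlib

section
/- Let f : 𝔻 → 𝔻 be an analytic function on the unit disk with a zero of order p ≥ 1 at the origin (i.e., f(0) = f'(0) = ⋯ = f^{(p-1)}(0) = 0 and f^{(p)}(0) ≠ 0). Then for every z ∈ 𝔻, |f(z)| ≤ |z|^p · (|z| + |a_p|)/(1 + |a_p||z|), where a_p = f^{(p)}(0)/p!. -/
/-!
Write `f z = z ^ p * g z`, where `g` is the `p`-fold iterated `dslope` of `f` at `0`, so that
`g 0 = a_p`. Applying the Schwarz lemma `p` times gives `‖g‖ ≤ 1` on the disk. If `‖g‖ = 1`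
somewhere, `g` is a unimodular constant by the maximum modulus principle. Otherwise, with
`a = g 0` and the disk automorphism `φ_a w = (w - a) / (1 - conj a * w)`, the map `φ_a ∘ g`
vanishes at `0`, so `‖φ_a (g z)‖ ≤ ‖z‖` by the Schwarz lemma, and `g z = φ_{-a} (φ_a (g z))`
has norm at most `(‖z‖ + ‖a‖) / (1 + ‖a‖ * ‖z‖)`.
-/

open Complex Metric Real

open Set Function Topology ComplexConjugate

theorem monotoneOn_add_div_one_add_mul {A : ℝ} (hA₀ : 0 ≤ A) (hA₁ : A ≤ 1) :
    MonotoneOn (fun t => (t + A) / (1 + A * t)) (Ici 0) := by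
  intro s hs t ht hst
  simp only [mem_Ici] at hs ht
  rw [div_le_div_iff₀ (by positivity) (by positivity)]
  nlinarith [mul_nonneg (sub_nonneg.2 hst) (by nlinarith : 0 ≤ 1 - A * A)]

namespace Complex

theorem sq_norm_one_add_conj_mul_sub_sq_norm_add (a x : ℂ) :
    ‖1 + conj a * x‖ ^ 2 - ‖x + a‖ ^ 2 = (1 - ‖a‖ ^ 2) * (1 - ‖x‖ ^ 2) := by
  simp only [Complex.sq_norm, normSq_apply, add_re, add_im, mul_re, mul_im, conj_re, conj_im,
    one_re, one_im]
  ring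

theorem one_sub_conj_mul_ne_zero {a w : ℂ} (ha : ‖a‖ < 1) (hw : ‖w‖ ≤ 1) :
    1 - conj a * w ≠ 0 := by
  rw [sub_ne_zero]
  refine fun h => (ne_of_lt (?_ : ‖conj a * w‖ < 1)) (by rw [← h, norm_one])
  rw [norm_mul, norm_conj]
  exact mul_lt_one_of_nonneg_of_lt_one_left (norm_nonneg a) ha hw

noncomputable def blaschkeFactor (a w : ℂ) : ℂ := (w - a) / (1 - conj a * w)

theorem blaschkeFactor_self (a : ℂ) : blaschkeFactor a a = 0 := by
  simp [blaschkeFactor]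

theorem differentiableOn_blaschkeFactor {a : ℂ} (ha : ‖a‖ < 1) :
    DifferentiableOn ℂ (blaschkeFactor a) (ball 0 1) := fun _ hw =>
  ((differentiableAt_id.sub_const a).div ((differentiableAt_const 1).sub
    (differentiableAt_id.const_mul _)) (one_sub_conj_mul_ne_zero ha
      (mem_ball_zero_iff.1 hw).le)).differentiableWithinAt

theorem norm_blaschkeFactor_lt_one {a w : ℂ} (ha : ‖a‖ < 1) (hw : ‖w‖ < 1) :
    ‖blaschkeFactor a w‖ < 1 := by
  have key := sq_norm_one_add_conj_mul_sub_sq_norm_add (-a) w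
  simp only [map_neg, neg_mul, ← sub_eq_add_neg, norm_neg] at key
  have hpos : 0 < (1 - ‖a‖ ^ 2) * (1 - ‖w‖ ^ 2) := by
    have := norm_nonneg a; have := norm_nonneg w
    apply mul_pos <;> nlinarith
  rw [blaschkeFactor, norm_div, div_lt_one (norm_pos_iff.2 (one_sub_conj_mul_ne_zero ha hw.le))]
  exact lt_of_pow_lt_pow_left₀ 2 (norm_nonneg _) (by linarith)

theorem blaschkeFactor_neg_blaschkeFactor {a w : ℂ} (ha : ‖a‖ < 1) (hw : ‖w‖ ≤ 1) :
    blaschkeFactor (-a) (blaschkeFactor a w) = w := by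
  have hden := one_sub_conj_mul_ne_zero ha hw
  have hconj : (1 : ℂ) - conj a * a ≠ 0 := by
    rw [conj_mul', ← ofReal_pow, ← ofReal_one, ← ofReal_sub, ofReal_ne_zero, sub_ne_zero]
    exact (pow_lt_one₀ (norm_nonneg a) ha two_ne_zero).ne'
  set b := blaschkeFactor a w
  have hb : b * (1 - conj a * w) = w - a := div_mul_cancel₀ _ hden
  have hnum : (b + a) * (1 - conj a * w) = w * (1 - conj a * a) := by linear_combination hb
  have hdenom : (1 + conj a * b) * (1 - conj a * w) = 1 - conj a * a := by
    linear_combination conj a * hb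
  simp only [blaschkeFactor, map_neg, neg_mul, sub_neg_eq_add]
  rw [← mul_div_mul_right _ _ hden, hnum, hdenom, mul_div_cancel_right₀ _ hconj]

theorem norm_blaschkeFactor_neg_le {a x : ℂ} (ha : ‖a‖ ≤ 1) (hx : ‖x‖ ≤ 1) :
    ‖blaschkeFactor (-a) x‖ ≤ (‖x‖ + ‖a‖) / (1 + ‖a‖ * ‖x‖) := by
  have key := sq_norm_one_add_conj_mul_sub_sq_norm_add a x
  have hsq : ‖x + a‖ ^ 2 ≤ (‖x‖ + ‖a‖) ^ 2 := pow_le_pow_left₀ (norm_nonneg _) (norm_add_le x a) 2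
  have hfac : 0 ≤ (1 - ‖a‖ ^ 2) * (1 - ‖x‖ ^ 2) := by
    have := norm_nonneg a; have := norm_nonneg x
    apply mul_nonneg <;> nlinarith
  simp only [blaschkeFactor, map_neg, neg_mul, sub_neg_eq_add, norm_div]
  rcases (norm_nonneg (1 + conj a * x)).eq_or_lt with hD | hD
  · rw [← hD, div_zero]; positivity
  rw [div_le_div_iff₀ hD (by positivity)]
  refine le_of_pow_le_pow_left₀ two_ne_zero (by positivity) ?_
  -- `(1 + ‖a‖ * ‖x‖) ^ 2` exceeds `(‖x‖ + ‖a‖) ^ 2` by the same `(1 - ‖a‖ ^ 2) * (1 - ‖x‖ ^ 2)`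
  nlinarith [mul_le_mul_of_nonneg_right hsq hfac]

theorem norm_le_of_mapsTo_ball_ball {g : ℂ → ℂ} {z : ℂ}
    (hd : DifferentiableOn ℂ g (ball 0 1)) (hmaps : MapsTo g (ball 0 1) (ball 0 1))
    (hz : z ∈ ball 0 1) :
    ‖g z‖ ≤ (‖z‖ + ‖g 0‖) / (1 + ‖g 0‖ * ‖z‖) := by
  set a := g 0
  have hg : ∀ w ∈ ball (0 : ℂ) 1, ‖g w‖ < 1 := fun w hw => mem_ball_zero_iff.1 (hmaps hw)
  have ha : ‖a‖ < 1 := hg 0 (mem_ball_self one_pos)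
  set h := blaschkeFactor a ∘ g
  have hhd : DifferentiableOn ℂ h (ball 0 1) := (differentiableOn_blaschkeFactor ha).comp hd hmaps
  have hhmaps : MapsTo h (ball 0 1) (closedBall 0 1) := fun w hw =>
    mem_closedBall_zero_iff.2 (norm_blaschkeFactor_lt_one ha (hg w hw)).le
  have hhz : ‖h z‖ ≤ ‖z‖ :=
    norm_le_norm_of_mapsTo_ball hhd hhmaps (blaschkeFactor_self a) (mem_ball_zero_iff.1 hz)
  have hz₁ : ‖z‖ ≤ 1 := (mem_ball_zero_iff.1 hz).le
  calc ‖g z‖ = ‖blaschkeFactor (-a) (h z)‖ :=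
        congrArg norm (blaschkeFactor_neg_blaschkeFactor ha (hg z hz).le).symm
    _ ≤ (‖h z‖ + ‖a‖) / (1 + ‖a‖ * ‖h z‖) := norm_blaschkeFactor_neg_le ha.le (hhz.trans hz₁)
    _ ≤ (‖z‖ + ‖a‖) / (1 + ‖a‖ * ‖z‖) :=
        monotoneOn_add_div_one_add_mul (norm_nonneg a) ha.le (norm_nonneg _) (norm_nonneg z) hhz

theorem norm_le_of_mapsTo_ball_closedBall {g : ℂ → ℂ} {z : ℂ}
    (hd : DifferentiableOn ℂ g (ball 0 1)) (hmaps : MapsTo g (ball 0 1) (closedBall 0 1))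
    (hz : z ∈ ball 0 1) :
    ‖g z‖ ≤ (‖z‖ + ‖g 0‖) / (1 + ‖g 0‖ * ‖z‖) := by
  by_cases hlt : MapsTo g (ball 0 1) (ball 0 1)
  · exact norm_le_of_mapsTo_ball_ball hd hlt hz
  obtain ⟨w, hw, hgw⟩ : ∃ w ∈ ball (0 : ℂ) 1, ‖g w‖ = 1 := by
    simp only [MapsTo, not_forall, mem_ball_zero_iff, not_lt] at hlt
    obtain ⟨w, hw, hgw⟩ := hlt
    exact ⟨w, mem_ball_zero_iff.2 hw, le_antisymm (mem_closedBall_zero_iff.1 (hmaps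
      (mem_ball_zero_iff.2 hw))) hgw⟩
  have hconst : ∀ x ∈ ball (0 : ℂ) 1, ‖g x‖ = 1 := fun x hx => hgw ▸
    norm_eqOn_of_isPreconnected_of_isMaxOn (convex_ball 0 1).isPreconnected isOpen_ball hd hw
      (fun y hy => (mem_closedBall_zero_iff.1 (hmaps hy)).trans hgw.ge) hx
  rw [hconst z hz, hconst 0 (mem_ball_self one_pos), one_mul, add_comm, div_self (by positivity)]

end Complex

theorem AnalyticAt.iterate_dslope_self {𝕜 : Type*} [NontriviallyNormedField 𝕜] [CompleteSpace 𝕜]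
    [CharZero 𝕜] {f : 𝕜 → 𝕜} {c : 𝕜} (hf : AnalyticAt 𝕜 f c) (n : ℕ) :
    (swap dslope c)^[n] f c = iteratedDeriv n f c / n.factorial := by
  rw [← (hf.hasFPowerSeriesAt.has_fpower_series_iterate_dslope_fslope n).coeff_zero 1]
  change (FormalMultilinearSeries.fslope^[n] _).coeff 0 = _
  rw [FormalMultilinearSeries.coeff_iterate_fslope, zero_add,
    FormalMultilinearSeries.coeff_ofScalars]

variable {E : Type*} [NormedAddCommGroup E] [NormedSpace ℂ E] [CompleteSpace E]

theorem DifferentiableOn.iterate_dslope {f : ℂ → E} {s : Set ℂ} {c : ℂ}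
    (hf : DifferentiableOn ℂ f s) (hs : s ∈ 𝓝 c) (n : ℕ) :
    DifferentiableOn ℂ ((swap dslope c)^[n] f) s := by
  induction n with
  | zero => exact hf
  | succ n ih => rw [iterate_succ_apply']; exact (Complex.differentiableOn_dslope hs).2 ih

theorem mapsTo_iterate_dslope_closedBall {f : ℂ → E} {c : ℂ} {R₁ R₂ : ℝ} {n : ℕ}
    (hd : DifferentiableOn ℂ f (ball c R₁)) (hmaps : MapsTo f (ball c R₁) (closedBall 0 R₂))
    (hzero : ∀ k < n, (swap dslope c)^[k] f c = 0) :
    MapsTo ((swap dslope c)^[n] f) (ball c R₁) (closedBall 0 (R₂ / R₁ ^ n)) := by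
  induction n with
  | zero => simpa using hmaps
  | succ n ih =>
    intro z hz
    have hR₁ : 0 < R₁ := nonempty_ball.1 ⟨z, hz⟩
    have hmaps_n := ih fun k hk => hzero k (hk.trans n.lt_succ_self)
    rw [← hzero n n.lt_succ_self] at hmaps_n
    rw [mem_closedBall_zero_iff, iterate_succ_apply', pow_succ, ← div_div]
    exact Complex.norm_dslope_le_div_of_mapsTo_ball (hd.iterate_dslope (ball_mem_nhds c hR₁) n)
      hmaps_n hz

theorem schwarz_zero_order_p_general
    (f : ℂ → ℂ) (p : ℕ)
    (hf : DifferentiableOn ℂ f (ball (0:ℂ) 1))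
    (hmaps : ∀ z ∈ ball (0:ℂ) 1, f z ∈ ball (0:ℂ) 1)
    (hzero : ∀ k < p, iteratedDeriv k f 0 = 0) :
    ∀ z ∈ ball (0:ℂ) 1,
      ‖f z‖ ≤ (‖z‖) ^ p *
        ((‖z‖ + ‖iteratedDeriv p f 0‖ / (p.factorial : ℝ)) /
          (1 + (‖iteratedDeriv p f 0‖ / (p.factorial : ℝ)) * ‖z‖)) := by
  intro z hz
  set g := (swap dslope (0 : ℂ))^[p] f
  have hfa : AnalyticAt ℂ f 0 := hf.analyticAt (ball_mem_nhds 0 one_pos)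
  have hvanish : ∀ k < p, (swap dslope (0 : ℂ))^[k] f 0 = 0 := fun k hk => by
    rw [hfa.iterate_dslope_self, hzero k hk, zero_div]
  have hfg : f z = z ^ p * g z := by
    simpa using (pow_sub_smul_iterate_dslope_of_zero p hvanish z).symm
  have hg₀ : ‖g 0‖ = ‖iteratedDeriv p f 0‖ / p.factorial := by
    rw [show g 0 = _ from hfa.iterate_dslope_self p, norm_div, Complex.norm_natCast]
  have hgd : DifferentiableOn ℂ g (ball 0 1) := hf.iterate_dslope (ball_mem_nhds 0 one_pos) p
  have hgmaps : MapsTo g (ball 0 1) (closedBall 0 1) := by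
    simpa using mapsTo_iterate_dslope_closedBall hf
      (fun w hw => ball_subset_closedBall (hmaps w hw)) hvanish
  rw [hfg, norm_mul, norm_pow, ← hg₀]
  gcongr
  exact Complex.norm_le_of_mapsTo_ball_closedBall hgd hgmaps hz

theorem schwarz_zero_order_p
    (f : ℂ → ℂ) (p : ℕ) (hp : 1 ≤ p)
    (hf : DifferentiableOn ℂ f (ball (0:ℂ) 1))
    (hmaps : ∀ z ∈ ball (0:ℂ) 1, f z ∈ ball (0:ℂ) 1)
    (hzero : ∀ k < p, iteratedDeriv k f 0 = 0)
    (hpne : iteratedDeriv p f 0 ≠ 0) :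
    ∀ z ∈ ball (0:ℂ) 1,
      ‖f z‖ ≤ (‖z‖) ^ p *
        ((‖z‖ + ‖iteratedDeriv p f 0‖ / (p.factorial : ℝ)) /
          (1 + (‖iteratedDeriv p f 0‖ / (p.factorial : ℝ)) * ‖z‖)) :=
  schwarz_zero_order_p_general f p hf hmaps hzero
end

section
/- For every complex number ζ with |Re ζ| ≤ π/2 (and e^{iζ} ≠ −1), one has tan(|Re ζ|/2) ≤ |(e^{iζ} − 1)/(e^{iζ} + 1)|. -/
/-!
Write `w = e^{iζ} = r e^{ix}` with `r = e^{-Im ζ}`, `x = Re ζ` and `c = cos x`, which is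
nonnegative because `|x| ≤ π/2`. Then `|(w - 1)/(w + 1)|² = (r² - 2rc + 1)/(r² + 2rc + 1)`,
and this is smallest on the unit circle `r = 1`, where it equals `(1 - c)/(1 + c) = tan²(x/2)`:
after cross-multiplying, the two sides differ by `2c(r - 1)²`.
-/

open Complex Real

theorem Real.tan_half_sq (x : ℝ) : Real.tan (x / 2) ^ 2 = (1 - Real.cos x) / (1 + Real.cos x) := by
  have hcos : Real.cos (x / 2) ^ 2 = (1 + Real.cos x) / 2 := by
    rw [Real.cos_sq, mul_div_cancel₀ x two_ne_zero]; ring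
  have hsin : Real.sin (x / 2) ^ 2 = (1 - Real.cos x) / 2 := by
    rw [Real.sin_sq, hcos]; ring
  rw [Real.tan_eq_sin_div_cos, div_pow, hsin, hcos, div_div_div_cancel_right₀ two_ne_zero]

theorem Complex.exp_re_eq_norm_mul_cos (z : ℂ) :
    (Complex.exp z).re = ‖Complex.exp z‖ * Real.cos z.im := by
  rw [Complex.exp_re, Complex.norm_exp]

theorem Complex.norm_sub_one_div_add_one_sq (w : ℂ) :
    ‖(w - 1) / (w + 1)‖ ^ 2 = (‖w‖ ^ 2 - 2 * w.re + 1) / (‖w‖ ^ 2 + 2 * w.re + 1) := by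
  simp only [norm_div, div_pow, Complex.sq_norm, Complex.normSq_sub, Complex.normSq_add,
    map_one, mul_one]
  ring

theorem one_sub_div_one_add_le {r c : ℝ} (hr : 0 ≤ r) (hc : 0 ≤ c) :
    (1 - c) / (1 + c) ≤ (r ^ 2 - 2 * (r * c) + 1) / (r ^ 2 + 2 * (r * c) + 1) := by
  rw [div_le_div_iff₀ (by positivity) (by positivity)]
  nlinarith [mul_nonneg hc (sq_nonneg (r - 1))]

theorem tan_half_re_le_abs_cayley_general
    (ζ : ℂ) (hre : |ζ.re| ≤ π / 2) :
    Real.tan (|ζ.re| / 2) ≤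
      ‖(Complex.exp (Complex.I * ζ) - 1) / (Complex.exp (Complex.I * ζ) + 1)‖ := by
  set w := Complex.exp (Complex.I * ζ)
  have hw_re : w.re = ‖w‖ * Real.cos ζ.re := by
    simpa using Complex.exp_re_eq_norm_mul_cos (Complex.I * ζ)
  have hcos : 0 ≤ Real.cos ζ.re := Real.cos_nonneg_of_mem_Icc (abs_le.mp hre)
  refine le_of_pow_le_pow_left₀ two_ne_zero (norm_nonneg _) ?_
  rw [Real.tan_half_sq, Real.cos_abs, Complex.norm_sub_one_div_add_one_sq, hw_re]
  exact one_sub_div_one_add_le (norm_nonneg w) hcos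

theorem tan_half_re_le_abs_cayley
    (ζ : ℂ) (hre : |ζ.re| ≤ π / 2) (hne : Complex.exp (Complex.I * ζ) ≠ -1) :
    Real.tan (|ζ.re| / 2) ≤
      ‖(Complex.exp (Complex.I * ζ) - 1) / (Complex.exp (Complex.I * ζ) + 1)‖ :=
  tan_half_re_le_abs_cayley_general ζ hre
end

section
/- Let w = h + conj(g) be a sense-preserving harmonic mapping of 𝔻 with w(𝔻) ⊆ 𝔻, where h, g are analytic on 𝔻 with g(0) = 0. Then for every n ≥ 1, |h^{(n)}(0)|/n! + |g^{(n)}(0)|/n! ≤ 4/π. -/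
/-!
For `‖μ‖ = 1` the holomorphic function `F = μ h + conj μ g` has `Re F = Re (μ (h + conj g))`,
so `|Re F| < 1` on the disc, and its `n`-th Taylor coefficient is `μ aₙ + conj μ bₙ`; choosing
the phase of `μ` aligns the two terms, so this coefficient has modulus `‖aₙ‖ + ‖bₙ‖`.

For `n ≥ 1` the coefficient `cₙ` of a holomorphic `F` satisfies
`π rⁿ cₙ = ∫₀^{2π} Re F(r e^{iθ}) e^{-inθ} dθ`, because `conj F` contributes the conjugate of
`∫ F(r e^{iθ}) e^{inθ} dθ`, which vanishes by Cauchy's theorem. Rotating this integral to a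
real number bounds it by `∫₀^{2π} |cos (nθ + χ)| dθ = 4` when `|Re F| ≤ 1`; letting `r → 1`
gives `4 / π`.
-/

open Complex Metric Real ComplexConjugate Topology

theorem abs_cos_periodic : Function.Periodic (fun x => |Real.cos x|) π := fun x => by
  simp [Real.cos_add_pi]

theorem integral_abs_cos_add_pi (b : ℝ) : ∫ x in b..b + π, |Real.cos x| = 2 := by
  have hcos : ∀ x ∈ Set.uIcc (-(π / 2)) (-(π / 2) + π), |Real.cos x| = Real.cos x := by
    intro x hx
    rw [Set.uIcc_of_le (by linarith [pi_pos])] at hx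
    exact abs_of_nonneg (cos_nonneg_of_mem_Icc ⟨hx.1, by linarith [hx.2]⟩)
  rw [abs_cos_periodic.intervalIntegral_add_eq b (-(π / 2)),
    intervalIntegral.integral_congr hcos, integral_cos]
  norm_num [show -(π / 2) + π = π / 2 by ring]

theorem integral_abs_cos_nat_mul_add {n : ℕ} (hn : n ≠ 0) (b : ℝ) :
    ∫ t in 0..2 * π, |Real.cos (n * t + b)| = 4 := by
  have hn' : (n : ℝ) ≠ 0 := Nat.cast_ne_zero.mpr hn
  have hend : (n : ℝ) * (2 * π) + b = n * 0 + b + (2 * n : ℤ) • π := by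
    rw [zsmul_eq_mul]; push_cast; ring
  rw [intervalIntegral.integral_comp_mul_add (fun x => |Real.cos x|) hn', hend,
    abs_cos_periodic.intervalIntegral_add_zsmul_eq _ _
      fun _ _ => continuous_cos.abs.intervalIntegrable _ _,
    integral_abs_cos_add_pi, zsmul_eq_mul, smul_eq_mul]
  push_cast
  field_simp
  ring

theorem norm_integral_exp_neg_mul_le {u : ℝ → ℝ} (hu : Continuous u) {M : ℝ}
    (hM : ∀ θ, |u θ| ≤ M) {n : ℕ} (hn : n ≠ 0) :
    ‖∫ θ in 0..2 * π, exp (-(n * θ * I)) * (u θ : ℂ)‖ ≤ 4 * M := by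
  set v := ∫ θ in 0..2 * π, exp (-(n * θ * I)) * (u θ : ℂ)
  have hrot : exp (-(arg v * I)) * v = ‖v‖ := by
    rw [Complex.exp_neg, inv_mul_eq_iff_eq_mul₀ (Complex.exp_ne_zero _), mul_comm]
    exact (norm_mul_exp_arg_mul_I v).symm
  have hshift : exp (-(arg v * I)) * v =
      ∫ θ in 0..2 * π, exp (-((n * θ + arg v : ℝ) * I)) * (u θ : ℂ) := by
    rw [← intervalIntegral.integral_const_mul]
    refine intervalIntegral.integral_congr fun θ _ => ?_
    rw [← mul_assoc, ← Complex.exp_add]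
    push_cast
    ring_nf
  have hre : ‖v‖ = ∫ θ in 0..2 * π, u θ * Real.cos (n * θ + arg v) := by
    have h := intervalIntegral.intervalIntegral_re (𝕜 := ℂ) (μ := MeasureTheory.volume)
      (Continuous.intervalIntegrable (by fun_prop) 0 (2 * π) :
        IntervalIntegrable (fun θ : ℝ => exp (-((n * θ + arg v : ℝ) * I)) * (u θ : ℂ)) _ _ _)
    rw [← hshift, hrot, RCLike.re_to_complex, ofReal_re] at h
    rw [← h]
    refine intervalIntegral.integral_congr fun θ _ => ?_
    rw [RCLike.re_to_complex, re_mul_ofReal, ← neg_mul, ← ofReal_neg, exp_ofReal_mul_I_re,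
      Real.cos_neg, mul_comm]
  calc ‖v‖ = ∫ θ in 0..2 * π, u θ * Real.cos (n * θ + arg v) := hre
    _ ≤ ∫ θ in 0..2 * π, M * |Real.cos (n * θ + arg v)| := by
      refine intervalIntegral.integral_mono_on (by positivity)
        (Continuous.intervalIntegrable (by fun_prop) _ _)
        (Continuous.intervalIntegrable (by fun_prop) _ _) ?_
      intro θ _
      calc u θ * Real.cos (n * θ + arg v) ≤ |u θ * Real.cos (n * θ + arg v)| := le_abs_self _
        _ ≤ M * |Real.cos (n * θ + arg v)| := by
          rw [abs_mul]; exact mul_le_mul_of_nonneg_right (hM θ) (abs_nonneg _)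
    _ = 4 * M := by
      rw [intervalIntegral.integral_const_mul, integral_abs_cos_nat_mul_add hn, mul_comm]

section CircleIntegral

variable {F : ℂ → ℂ} {c : ℂ} {r : ℝ}

theorem integral_exp_neg_mul_circleMap (hr : 0 < r) (hF : DifferentiableOn ℂ F (closedBall c r))
    (n : ℕ) :
    ∫ θ in 0..2 * π, exp (-(n * θ * I)) * F (circleMap c r θ) =
      2 * π * r ^ n * (iteratedDeriv n F c / n.factorial) := by
  have hcauchy := hF.circleIntegral_one_div_sub_center_pow_smul hr n
  have hr' : (r : ℂ) ≠ 0 := ofReal_ne_zero.mpr hr.ne'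
  have hintegrand (θ : ℝ) : deriv (circleMap c r) θ • (1 / (circleMap c r θ - c) ^ (n + 1)) •
      F (circleMap c r θ) = I / (r : ℂ) ^ n * (exp (-(n * θ * I)) * F (circleMap c r θ)) := by
    rw [deriv_circleMap, circleMap_sub_center, circleMap_zero, smul_eq_mul, smul_eq_mul,
      Complex.exp_neg, mul_assoc (n : ℂ), Complex.exp_nat_mul]
    field_simp
    ring
  rw [circleIntegral] at hcauchy
  simp_rw [hintegrand, intervalIntegral.integral_const_mul, smul_eq_mul] at hcauchy
  have hfac : (n.factorial : ℂ) ≠ 0 := Nat.cast_ne_zero.mpr n.factorial_ne_zero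
  field_simp at hcauchy ⊢
  exact hcauchy

theorem integral_exp_mul_circleMap_eq_zero (hr : 0 < r)
    (hF : DifferentiableOn ℂ F (closedBall c r)) {n : ℕ} (hn : n ≠ 0) :
    ∫ θ in 0..2 * π, exp (n * θ * I) * F (circleMap c r θ) = 0 := by
  obtain ⟨m, rfl⟩ := Nat.exists_eq_succ_of_ne_zero hn
  have hcauchy : ∮ z in C(c, r), (z - c) ^ m • F z = 0 :=
    (((differentiableOn_id.sub_const c).pow m).smul hF).mono closure_ball_subset_closedBall
      |>.diffContOnCl.circleIntegral_eq_zero hr.le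
  have hr' : (r : ℂ) ≠ 0 := ofReal_ne_zero.mpr hr.ne'
  have hintegrand (θ : ℝ) : deriv (circleMap c r) θ • (circleMap c r θ - c) ^ m •
      F (circleMap c r θ) =
        I * (r : ℂ) ^ (m + 1) * (exp ((m + 1 : ℕ) * θ * I) * F (circleMap c r θ)) := by
    rw [deriv_circleMap, circleMap_sub_center, circleMap_zero, smul_eq_mul, smul_eq_mul,
      mul_assoc ((m + 1 : ℕ) : ℂ), Complex.exp_nat_mul]
    ring
  rw [circleIntegral] at hcauchy
  simp_rw [hintegrand, intervalIntegral.integral_const_mul] at hcauchy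
  simpa [hr', I_ne_zero] using hcauchy

theorem integral_exp_neg_mul_re_circleMap (hr : 0 < r)
    (hF : DifferentiableOn ℂ F (closedBall c r)) {n : ℕ} (hn : n ≠ 0) :
    ∫ θ in 0..2 * π, exp (-(n * θ * I)) * ((F (circleMap c r θ)).re : ℂ) =
      π * r ^ n * (iteratedDeriv n F c / n.factorial) := by
  have hFc : Continuous fun θ => F (circleMap c r θ) :=
    hF.continuousOn.comp_continuous (continuous_circleMap c r) (circleMap_mem_closedBall c hr.le)
  have he : Continuous fun θ : ℝ => exp (-(n * θ * I)) := by fun_prop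
  have hconj : ∫ θ in 0..2 * π, exp (-(n * θ * I)) * conj (F (circleMap c r θ)) = 0 := by
    have h (θ : ℝ) : exp (-(n * θ * I)) * conj (F (circleMap c r θ)) =
        conj (exp (n * θ * I) * F (circleMap c r θ)) := by
      rw [map_mul, ← exp_conj]; simp
    simp_rw [h, intervalIntegral.intervalIntegral_conj,
      integral_exp_mul_circleMap_eq_zero hr hF hn, map_zero]
  simp_rw [re_eq_add_conj, mul_div_assoc', mul_add, intervalIntegral.integral_div]
  rw [intervalIntegral.integral_add (f := fun θ => exp (-(n * θ * I)) * F (circleMap c r θ))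
    (g := fun θ => exp (-(n * θ * I)) * conj (F (circleMap c r θ)))
    ((he.mul hFc).intervalIntegrable _ _)
    ((he.mul (continuous_conj.comp hFc)).intervalIntegrable _ _),
    hconj, integral_exp_neg_mul_circleMap hr hF]
  ring

theorem norm_iteratedDeriv_div_factorial_mul_pow_le (hr : 0 < r)
    (hF : DifferentiableOn ℂ F (closedBall c r)) {M : ℝ} (hM : ∀ z ∈ sphere c r, |(F z).re| ≤ M)
    {n : ℕ} (hn : n ≠ 0) :
    ‖iteratedDeriv n F c‖ / n.factorial * r ^ n ≤ 4 / π * M := by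
  have hFc : Continuous fun θ => F (circleMap c r θ) :=
    hF.continuousOn.comp_continuous (continuous_circleMap c r) (circleMap_mem_closedBall c hr.le)
  have h := norm_integral_exp_neg_mul_le (u := fun θ => (F (circleMap c r θ)).re)
    (continuous_re.comp hFc) (fun θ => hM _ (circleMap_mem_sphere c hr.le θ)) hn
  rw [integral_exp_neg_mul_re_circleMap hr hF hn, norm_mul, norm_mul, norm_div, norm_pow,
    norm_real, norm_real, Complex.norm_natCast, Real.norm_of_nonneg pi_pos.le,
    Real.norm_of_nonneg hr.le] at h
  rw [div_mul_eq_mul_div 4 π M, le_div_iff₀' pi_pos]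
  exact le_of_eq_of_le (by ring) h

theorem norm_iteratedDeriv_div_factorial_mul_pow_le_of_ball {R : ℝ} (hR : 0 < R)
    (hF : DifferentiableOn ℂ F (ball c R)) {M : ℝ} (hM : ∀ z ∈ ball c R, |(F z).re| ≤ M)
    {n : ℕ} (hn : n ≠ 0) :
    ‖iteratedDeriv n F c‖ / n.factorial * R ^ n ≤ 4 / π * M := by
  have hlim : Filter.Tendsto (fun r => ‖iteratedDeriv n F c‖ / n.factorial * r ^ n) (𝓝[<] R)
      (𝓝 (‖iteratedDeriv n F c‖ / n.factorial * R ^ n)) :=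
    ((continuous_const.mul (continuous_pow n)).tendsto R).mono_left nhdsWithin_le_nhds
  refine le_of_tendsto hlim ?_
  filter_upwards [Ioo_mem_nhdsLT hR] with r hr
  exact norm_iteratedDeriv_div_factorial_mul_pow_le hr.1 (hF.mono (closedBall_subset_ball hr.2))
    (fun z hz => hM z (sphere_subset_closedBall.trans (closedBall_subset_ball hr.2) hz)) hn

end CircleIntegral

theorem exists_norm_eq_one_norm_mul_add_conj_mul (a b : ℂ) :
    ∃ μ : ℂ, ‖μ‖ = 1 ∧ ‖μ * a + conj μ * b‖ = ‖a‖ + ‖b‖ := by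
  set φ : ℝ := (arg b - arg a) / 2
  set ψ : ℝ := (arg a + arg b) / 2
  refine ⟨exp (φ * I), norm_exp_ofReal_mul_I φ, ?_⟩
  have ha : exp (φ * I) * exp (arg a * I) = exp (ψ * I) := by
    rw [← Complex.exp_add]; congr 1; simp only [φ, ψ]; push_cast; ring
  have hb : conj (exp (φ * I)) * exp (arg b * I) = exp (ψ * I) := by
    rw [← exp_conj, map_mul, conj_ofReal, conj_I, ← Complex.exp_add]; congr 1
    simp only [φ, ψ]; push_cast; ring
  have hsum :
      exp (φ * I) * a + conj (exp (φ * I)) * b = ((‖a‖ + ‖b‖ : ℝ) : ℂ) * exp (ψ * I) := by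
    conv_lhs => rw [← norm_mul_exp_arg_mul_I a, ← norm_mul_exp_arg_mul_I b]
    push_cast
    linear_combination (‖a‖ : ℂ) * ha + (‖b‖ : ℂ) * hb
  rw [hsum, norm_mul, norm_exp_ofReal_mul_I, mul_one, norm_real,
    Real.norm_of_nonneg (by positivity)]

theorem re_mul_add_conj_mul (μ a b : ℂ) : (μ * a + conj μ * b).re = (μ * (a + conj b)).re := by
  rw [mul_add, add_re, add_re, ← conj_re (conj μ * b), map_mul, conj_conj]

theorem harmonic_coeff_bound_general
    (h g : ℂ → ℂ)
    (hh : DifferentiableOn ℂ h (ball (0:ℂ) 1))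
    (hg : DifferentiableOn ℂ g (ball (0:ℂ) 1))
    (hmaps : ∀ z ∈ ball (0:ℂ) 1, ‖h z + (starRingEnd ℂ) (g z)‖ < 1) :
    ∀ n : ℕ, 1 ≤ n →
      ‖iteratedDeriv n h 0‖ / (n.factorial : ℝ) +
        ‖iteratedDeriv n g 0‖ / (n.factorial : ℝ) ≤ 4 / π := by
  intro n hn
  obtain ⟨μ, hμ, hnorm⟩ :=
    exists_norm_eq_one_norm_mul_add_conj_mul (iteratedDeriv n h 0) (iteratedDeriv n g 0)
  have hF : DifferentiableOn ℂ (fun z => μ * h z + conj μ * g z) (ball 0 1) :=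
    (hh.const_mul μ).add (hg.const_mul (conj μ))
  have hre (z : ℂ) (hz : z ∈ ball (0 : ℂ) 1) : |(μ * h z + conj μ * g z).re| ≤ 1 := by
    rw [re_mul_add_conj_mul]
    refine (abs_re_le_norm _).trans ?_
    rw [norm_mul, hμ, one_mul]
    exact (hmaps z hz).le
  have hsmooth {f : ℂ → ℂ} (hf : DifferentiableOn ℂ f (ball 0 1)) : ContDiffAt ℂ n f 0 :=
    (hf.contDiffOn isOpen_ball).contDiffAt (ball_mem_nhds 0 one_pos)
  have hderiv : iteratedDeriv n (fun z => μ * h z + conj μ * g z) 0 =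
      μ * iteratedDeriv n h 0 + conj μ * iteratedDeriv n g 0 := by
    rw [iteratedDeriv_fun_add (contDiffAt_const.mul (hsmooth hh))
      (contDiffAt_const.mul (hsmooth hg)), iteratedDeriv_const_mul_field,
      iteratedDeriv_const_mul_field]
  have hbound := norm_iteratedDeriv_div_factorial_mul_pow_le_of_ball one_pos hF hre
    (Nat.one_le_iff_ne_zero.mp hn)
  rwa [hderiv, hnorm, one_pow, mul_one, mul_one, add_div] at hbound

theorem harmonic_coeff_bound
    (h g : ℂ → ℂ)
    (hh : DifferentiableOn ℂ h (ball (0:ℂ) 1))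
    (hg : DifferentiableOn ℂ g (ball (0:ℂ) 1))
    (hg0 : g 0 = 0)
    (hsp : ∀ z ∈ ball (0:ℂ) 1, ‖deriv g z‖ < ‖deriv h z‖)
    (hmaps : ∀ z ∈ ball (0:ℂ) 1, ‖h z + (starRingEnd ℂ) (g z)‖ < 1) :
    ∀ n : ℕ, 1 ≤ n →
      ‖iteratedDeriv n h 0‖ / (n.factorial : ℝ) +
        ‖iteratedDeriv n g 0‖ / (n.factorial : ℝ) ≤ 4 / π :=
  harmonic_coeff_bound_general h g hh hg hmaps
end

section
/- Let w = h + conj(g) be a sense-preserving harmonic mapping of 𝔻 with w(𝔻) ⊆ 𝔻 and a zero of order p ≥ 1 at 0. Then for every z ∈ 𝔻, |w(z)| ≤ (4/π) arctan |z|^p. -/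
/-!
Rotate so that `w(z₀)` becomes positive: for `|c| = π/4` with `c w(z₀) = (π/4)|w(z₀)|`, the
holomorphic function `F = c h + c̄ g` has `Re F = Re (c w)`, so `F` maps the disk into the strip
`|Re ζ| < π/4` and vanishes to order `p` at `0`. The map `tan` sends this strip into the unit disk,
so the Schwarz lemma of order `p` gives `|tan F(z)| ≤ |z|^p`, while `|tan (Re ζ)| ≤ |tan ζ|` on the
strip. Hence `(π/4)|w(z₀)| = Re F(z₀) ≤ arctan |z₀|^p`.
-/

open Complex Metric Real Set Filter Topology Asymptotics
open scoped ComplexConjugate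

theorem Real.cos_pos_of_abs_lt {x : ℝ} (hx : |x| < π / 2) : 0 < Real.cos x :=
  Real.cos_pos_of_mem_Ioo (abs_lt.mp hx)

theorem Real.sin_sq_lt_cos_sq {x : ℝ} (hx : |x| < π / 4) : Real.sin x ^ 2 < Real.cos x ^ 2 := by
  have : 0 < Real.cos (2 * x) := Real.cos_pos_of_abs_lt (by rw [abs_mul, abs_two]; linarith)
  rw [Real.cos_two_mul'] at this
  linarith

theorem Real.abs_le_arctan_of_abs_tan_le {x t : ℝ} (hx : |x| < π / 2) (ht : |Real.tan x| ≤ t) :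
    |x| ≤ arctan t := by
  have key : ∀ y, |y| < π / 2 → Real.tan y ≤ t → y ≤ arctan t := fun y hy hty ↦ by
    rw [← arctan_tan (abs_lt.mp hy).1 (abs_lt.mp hy).2]
    exact arctan_strictMono.monotone hty
  refine abs_le.mpr ⟨?_, key x hx ((le_abs_self _).trans ht)⟩
  have := key (-x) (by rwa [abs_neg]) (by rw [Real.tan_neg]; exact (neg_le_abs _).trans ht)
  linarith

namespace Complex

theorem normSq_sin (z : ℂ) : normSq (sin z) = Real.sin z.re ^ 2 + Real.sinh z.im ^ 2 := by
  rw [sin_eq, normSq_apply]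
  simp [← ofReal_sin, ← ofReal_cos, ← ofReal_sinh, ← ofReal_cosh]
  nlinarith [Real.sin_sq_add_cos_sq z.re, Real.cosh_sq z.im]

theorem normSq_cos (z : ℂ) : normSq (cos z) = Real.cos z.re ^ 2 + Real.sinh z.im ^ 2 := by
  rw [cos_eq, normSq_apply]
  simp [← ofReal_sin, ← ofReal_cos, ← ofReal_sinh, ← ofReal_cosh]
  nlinarith [Real.sin_sq_add_cos_sq z.re, Real.cosh_sq z.im]

theorem normSq_tan (z : ℂ) : normSq (tan z) =
    (Real.sin z.re ^ 2 + Real.sinh z.im ^ 2) / (Real.cos z.re ^ 2 + Real.sinh z.im ^ 2) := by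
  rw [tan_eq_sin_div_cos, map_div₀, normSq_sin, normSq_cos]

theorem cos_ne_zero_of_abs_re_lt {z : ℂ} (hz : |z.re| < π / 2) : cos z ≠ 0 := by
  have hcos := Real.cos_pos_of_abs_lt hz
  rw [← normSq_pos, normSq_cos]
  positivity

theorem norm_tan_lt_one {z : ℂ} (hz : |z.re| < π / 4) : ‖tan z‖ < 1 := by
  have hcos := Real.cos_pos_of_abs_lt (hz.trans (by linarith [pi_pos]))
  rw [← sq_lt_one_iff₀ (norm_nonneg _), ← normSq_eq_norm_sq, normSq_tan,
    div_lt_one (by positivity)]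
  linarith [Real.sin_sq_lt_cos_sq hz]

theorem abs_tan_re_le_norm_tan {z : ℂ} (hz : |z.re| < π / 4) : |Real.tan z.re| ≤ ‖tan z‖ := by
  have hcos := Real.cos_pos_of_abs_lt (hz.trans (by linarith [pi_pos]))
  rw [← sq_le_sq₀ (abs_nonneg _) (norm_nonneg _), sq_abs, ← normSq_eq_norm_sq, normSq_tan,
    Real.tan_eq_sin_div_cos, div_pow, div_le_div_iff₀ (by positivity) (by positivity)]
  nlinarith [Real.sin_sq_lt_cos_sq hz, sq_nonneg (Real.sinh z.im)]

theorem re_mul_add_conj (c a b : ℂ) : (c * (a + conj b)).re = (c * a + conj c * b).re := by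
  simp only [mul_re, add_re, add_im, conj_re, conj_im]
  ring

end Complex

section AnalyticOrder

variable {𝕜 : Type*} [NontriviallyNormedField 𝕜]

theorem le_analyticOrderAt_const_mul {f : 𝕜 → 𝕜} {z₀ : 𝕜} (c : 𝕜) :
    analyticOrderAt f z₀ ≤ analyticOrderAt (fun z ↦ c * f z) z₀ := by
  by_cases hf : AnalyticAt 𝕜 f z₀
  · exact (analyticOrderAt_smul (f := fun _ ↦ c) analyticAt_const hf).symm ▸ le_add_self
  · simp [analyticOrderAt_of_not_analyticAt hf]

theorem min_le_analyticOrderAt_const_mul_add_const_mul {f g : 𝕜 → 𝕜} {z₀ : 𝕜} (a b : 𝕜) :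
    min (analyticOrderAt f z₀) (analyticOrderAt g z₀) ≤
      analyticOrderAt (fun z ↦ a * f z + b * g z) z₀ :=
  (min_le_min (le_analyticOrderAt_const_mul a) (le_analyticOrderAt_const_mul b)).trans
    le_analyticOrderAt_add

theorem natCast_le_analyticOrderAt_comp {E : Type*} [NormedAddCommGroup E] [NormedSpace 𝕜 E]
    {f : 𝕜 → E} {g : 𝕜 → 𝕜} {z₀ : 𝕜} {n : ℕ} (hf : AnalyticAt 𝕜 f 0) (hf0 : f 0 = 0)
    (hg : AnalyticAt 𝕜 g z₀) (hn : n ≤ analyticOrderAt g z₀) :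
    n ≤ analyticOrderAt (f ∘ g) z₀ := by
  rcases n.eq_zero_or_pos with rfl | hpos
  · simp
  have hg0 : g z₀ = 0 :=
    apply_eq_zero_of_analyticOrderAt_ne_zero ((Nat.cast_pos.mpr hpos).trans_le hn).ne'
  have hf1 : 1 ≤ analyticOrderAt f 0 :=
    Order.one_le_iff_ne_zero.mpr (analyticOrderAt_ne_zero.mpr ⟨hf, hf0⟩)
  have hf' : AnalyticAt 𝕜 f (g z₀) := by rwa [hg0]
  rw [hf'.analyticOrderAt_comp hg]
  simp only [hg0, sub_zero]
  exact hn.trans (le_mul_of_one_le_left' hf1)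

end AnalyticOrder

theorem Complex.norm_le_mul_div_pow_of_mapsTo_ball {E : Type*} [NormedAddCommGroup E]
    [NormedSpace ℂ E] [CompleteSpace E] {f : ℂ → E} {z : ℂ} {R₁ R₂ : ℝ} {n : ℕ}
    (hd : DifferentiableOn ℂ f (ball 0 R₁)) (h_maps : MapsTo f (ball 0 R₁) (closedBall 0 R₂))
    (hn : n ≤ analyticOrderAt f 0) (hz : z ∈ ball 0 R₁) :
    ‖f z‖ ≤ R₂ * (‖z‖ / R₁) ^ n := by
  cases n with
  | zero => simpa using h_maps hz
  | succ m =>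
    have hf : AnalyticAt ℂ f 0 := hd.analyticAt (ball_mem_nhds 0 (nonempty_ball.mp ⟨z, hz⟩))
    have hf0 : f 0 = 0 :=
      apply_eq_zero_of_analyticOrderAt_ne_zero ((Nat.cast_add_one_pos m).trans_le hn).ne'
    obtain ⟨g, hg, hfg⟩ := (natCast_le_analyticOrderAt hf).mp hn
    have hlittle : (f · - f 0) =o[𝓝 0] (fun w ↦ ‖w - 0‖ ^ m) := by
      have hsmall : (fun w : ℂ ↦ w • g w) =o[𝓝 0] (fun _ ↦ (1 : ℝ)) := by
        refine (isLittleO_one_iff ℝ).mpr ?_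
        simpa using (continuous_id.tendsto 0).smul hg.continuousAt
      have hpow : (fun w : ℂ ↦ w ^ m) =O[𝓝 0] (fun w ↦ ‖w - 0‖ ^ m) := by
        simpa using (isBigO_refl (fun w : ℂ ↦ w ^ m) _).norm_right
      refine (hpow.smul_isLittleO hsmall).congr' ?_ (by simp)
      filter_upwards [hfg] with w hw
      simp [hw, hf0, pow_succ, mul_smul]
    simpa [hf0] using
      dist_le_mul_div_pow_of_mapsTo_ball_of_isLittleO hd (hf0 ▸ h_maps) hlittle hz

theorem Complex.abs_re_le_arctan_of_abs_re_lt_pi_div_four {F : ℂ → ℂ} {n : ℕ} {z : ℂ}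
    (hd : DifferentiableOn ℂ F (ball 0 1)) (hre : ∀ w ∈ ball (0 : ℂ) 1, |(F w).re| < π / 4)
    (hn : n ≤ analyticOrderAt F 0) (hz : z ∈ ball 0 1) :
    |(F z).re| ≤ Real.arctan (‖z‖ ^ n) := by
  have hcos : ∀ w ∈ ball (0 : ℂ) 1, cos (F w) ≠ 0 := fun w hw ↦
    cos_ne_zero_of_abs_re_lt ((hre w hw).trans (by linarith [pi_pos]))
  have htan_d : DifferentiableOn ℂ (tan ∘ F) (ball 0 1) := fun w hw ↦
    (differentiableAt_tan.mpr (hcos w hw)).comp_differentiableWithinAt w (hd w hw)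
  have htan_maps : MapsTo (tan ∘ F) (ball 0 1) (closedBall 0 1) := fun w hw ↦
    mem_closedBall_zero_iff.mpr (norm_tan_lt_one (hre w hw)).le
  have htan_order : n ≤ analyticOrderAt (tan ∘ F) 0 :=
    natCast_le_analyticOrderAt_comp (analyticAt_sin.div analyticAt_cos (by simp)) tan_zero
      (hd.analyticAt (ball_mem_nhds 0 one_pos)) hn
  have hschwarz := norm_le_mul_div_pow_of_mapsTo_ball htan_d htan_maps htan_order hz
  refine Real.abs_le_arctan_of_abs_tan_le ((hre z hz).trans (by linarith [pi_pos])) ?_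
  exact (abs_tan_re_le_norm_tan (hre z hz)).trans (by simpa using hschwarz)

theorem harmonic_schwarz_order_p_general
    (h g : ℂ → ℂ) (p : ℕ)
    (hh : DifferentiableOn ℂ h (ball (0:ℂ) 1))
    (hg : DifferentiableOn ℂ g (ball (0:ℂ) 1))
    (hmaps : ∀ z ∈ ball (0:ℂ) 1, ‖h z + (starRingEnd ℂ) (g z)‖ < 1)
    (hzero : ∀ k < p, iteratedDeriv k h 0 = 0 ∧ iteratedDeriv k g 0 = 0) :
    ∀ z ∈ ball (0:ℂ) 1,
      ‖h z + (starRingEnd ℂ) (g z)‖ ≤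
        (4 / π) * Real.arctan (‖z‖ ^ p) := by
  intro z hz
  obtain ⟨u, hu, hu_rot⟩ := exists_norm_eq_mul_self (h z + conj (g z))
  set c : ℂ := (π / 4 : ℝ) * u
  set F : ℂ → ℂ := fun w ↦ c * h w + conj c * g w
  have hre : ∀ w ∈ ball (0 : ℂ) 1, |(F w).re| < π / 4 := fun w hw ↦ by
    calc |(F w).re| = |(c * (h w + conj (g w))).re| := by rw [re_mul_add_conj]
      _ ≤ π / 4 * ‖h w + conj (g w)‖ := by
        simpa [c, hu, abs_of_pos pi_pos] using abs_re_le_norm (c * (h w + conj (g w)))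
      _ < π / 4 := by nlinarith [hmaps w hw, pi_pos]
  have horder : p ≤ analyticOrderAt F 0 := by
    have hh_order := (natCast_le_analyticOrderAt_iff_iteratedDeriv_eq_zero
      (hh.analyticAt (ball_mem_nhds 0 one_pos))).mpr fun k hk ↦ (hzero k hk).1
    have hg_order := (natCast_le_analyticOrderAt_iff_iteratedDeriv_eq_zero
      (hg.analyticAt (ball_mem_nhds 0 one_pos))).mpr fun k hk ↦ (hzero k hk).2
    exact (le_min hh_order hg_order).trans (min_le_analyticOrderAt_const_mul_add_const_mul _ _)
  have hbound : |(F z).re| ≤ _ := abs_re_le_arctan_of_abs_re_lt_pi_div_four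
    ((hh.const_mul c).add (hg.const_mul _)) hre horder hz
  have hFz : (F z).re = π / 4 * ‖h z + conj (g z)‖ := by
    rw [← re_mul_add_conj, mul_assoc, ← hu_rot, ← ofReal_mul, ofReal_re]
  rw [hFz, abs_of_nonneg (by positivity)] at hbound
  calc ‖h z + conj (g z)‖ = 4 / π * (π / 4 * ‖h z + conj (g z)‖) := by field_simp
    _ ≤ 4 / π * Real.arctan (‖z‖ ^ p) := by gcongr

theorem harmonic_schwarz_order_p
    (h g : ℂ → ℂ) (p : ℕ) (hp : 1 ≤ p)
    (hh : DifferentiableOn ℂ h (ball (0:ℂ) 1))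
    (hg : DifferentiableOn ℂ g (ball (0:ℂ) 1))
    (hg0 : g 0 = 0)
    (hsp : ∀ z ∈ ball (0:ℂ) 1, ‖deriv g z‖ < ‖deriv h z‖)
    (hmaps : ∀ z ∈ ball (0:ℂ) 1, ‖h z + (starRingEnd ℂ) (g z)‖ < 1)
    (hzero : ∀ k < p, iteratedDeriv k h 0 = 0 ∧ iteratedDeriv k g 0 = 0)
    (horder : ‖iteratedDeriv p g 0‖ < ‖iteratedDeriv p h 0‖) :
    ∀ z ∈ ball (0:ℂ) 1,
      ‖h z + (starRingEnd ℂ) (g z)‖ ≤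
        (4 / π) * Real.arctan (‖z‖ ^ p) :=
  harmonic_schwarz_order_p_general h g p hh hg hmaps hzero
end
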